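/- Let φ, φ' : S → ℝ^d be two representations, F = {x ↦ softmax(Wx) : W ∈ ℝ^{K×d}, ‖W‖_F ≤ 1}, G ⊆ {g : S → ℝ, ‖g‖_∞ ≤ 1}, and x = {(s_j,a_j,s̃_j,s̄_j)}_{j=1}^n a dataset. Define m̂_x(φ) = min_{f∈F} max_{g∈G} (1/n) Σ_j [K·f(φ(s_j))_{a_j}·g(s̃_j) − g(s̄_j)]. Then (m̂_x(φ) − m̂_x(φ'))² ≤ (4K²/n)·Σ_{j=1}^n ‖φ(s_j) − φ'(s_j)‖², where ‖·‖ is the Euclidean norm on ℝ^d. -/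

import Mathlib

/-!
Fix `W` with `‖W‖_F ≤ 1` and `g ∈ G`. Each logit `(W φ(s_j))_i` moves by at most
`‖φ(s_j) − φ'(s_j)‖` when `φ` is replaced by `φ'`, and softmax is 2-Lipschitz from the sup norm
on logits, so the payoff moves by at most `(2K/n) Σ_j ‖φ(s_j) − φ'(s_j)‖`, uniformly in `W` and
`g`. Infima and suprema of uniformly bounded families are 1-Lipschitz under uniform perturbations,
so `m̂` moves by the same amount; squaring and Cauchy–Schwarz `(Σ_j t_j)² ≤ n Σ_j t_j²` finish.
-/

noncomputable section

open MeasureTheory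

/-- softmax on `ℝ^K`. -/
def softmax {K : ℕ} (v : Fin K → ℝ) (a : Fin K) : ℝ :=
  Real.exp (v a) / ∑ j, Real.exp (v j)

/-- Frobenius norm of a `K × d` real matrix. -/
def frob {K d : ℕ} (W : Matrix (Fin K) (Fin d) ℝ) : ℝ :=
  Real.sqrt (∑ i, ∑ j, (W i j) ^ 2)

/-- `m̂_x(ψ) = min_{f∈F} max_{g∈G} (1/n) ∑_j [K f(ψ(s_j))_{a_j} g(s̃_j) − g(s̄_j)]`. -/
def mhat {S : Type} {d K n : ℕ} (G : Set (S → ℝ)) (s st sb : Fin n → S)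
    (a : Fin n → Fin K) (ψ : S → EuclideanSpace ℝ (Fin d)) : ℝ :=
  ⨅ W : {W : Matrix (Fin K) (Fin d) ℝ // frob W ≤ 1},
    ⨆ g : G, (1 / n : ℝ) * ∑ j,
      ((K : ℝ) * softmax (W.1.mulVec fun k => ψ (s j) k) (a j) * (g : S → ℝ) (st j)
        - (g : S → ℝ) (sb j))

open Set Finset

section InfSup

variable {ι κ : Type*}

-- The supremum of an empty family of reals is `0` by convention.
lemma abs_ciSup_le_of_abs_le {f : ι → ℝ} {B : ℝ} (hB : 0 ≤ B) (h : ∀ i, |f i| ≤ B) :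
    |⨆ i, f i| ≤ B := by
  rcases isEmpty_or_nonempty ι with _ | hι
  · simpa using hB
  have hbdd : BddAbove (range f) := ⟨B, forall_mem_range.2 fun i => (abs_le.1 (h i)).2⟩
  exact abs_le.2 ⟨(abs_le.1 (h hι.some)).1.trans (le_ciSup hbdd hι.some),
    ciSup_le fun i => (abs_le.1 (h i)).2⟩

lemma abs_ciSup_sub_ciSup_le {f g : ι → ℝ} {ε : ℝ} (hf : BddAbove (range f))
    (hg : BddAbove (range g)) (hε : 0 ≤ ε) (h : ∀ i, |f i - g i| ≤ ε) :
    |(⨆ i, f i) - ⨆ i, g i| ≤ ε := by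
  rcases isEmpty_or_nonempty ι with _ | _
  · simpa using hε
  refine abs_sub_le_iff.2 ⟨sub_le_iff_le_add.2 (ciSup_le fun i => ?_),
    sub_le_iff_le_add.2 (ciSup_le fun i => ?_)⟩
  · linarith [(abs_le.1 (h i)).2, le_ciSup hg i]
  · linarith [(abs_le.1 (h i)).1, le_ciSup hf i]

lemma abs_ciInf_sub_ciInf_le {f g : ι → ℝ} {ε : ℝ} (hf : BddBelow (range f))
    (hg : BddBelow (range g)) (hε : 0 ≤ ε) (h : ∀ i, |f i - g i| ≤ ε) :
    |(⨅ i, f i) - ⨅ i, g i| ≤ ε := by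
  rcases isEmpty_or_nonempty ι with _ | _
  · simpa using hε
  refine abs_sub_le_iff.2 ⟨sub_le_comm.2 (le_ciInf fun i => ?_),
    sub_le_comm.2 (le_ciInf fun i => ?_)⟩
  · linarith [(abs_le.1 (h i)).2, ciInf_le hf i]
  · linarith [(abs_le.1 (h i)).1, ciInf_le hg i]

lemma abs_ciInf_ciSup_sub_ciInf_ciSup_le {F F' : ι → κ → ℝ} {B ε : ℝ} (hB : 0 ≤ B)
    (hF : ∀ i k, |F i k| ≤ B) (hF' : ∀ i k, |F' i k| ≤ B) (hε : 0 ≤ ε)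
    (h : ∀ i k, |F i k - F' i k| ≤ ε) :
    |(⨅ i, ⨆ k, F i k) - ⨅ i, ⨆ k, F' i k| ≤ ε := by
  have bddAbove {f : κ → ℝ} (hf : ∀ k, |f k| ≤ B) : BddAbove (range f) :=
    ⟨B, forall_mem_range.2 fun k => (abs_le.1 (hf k)).2⟩
  have bddBelow_iSup {G : ι → κ → ℝ} (hG : ∀ i k, |G i k| ≤ B) :
      BddBelow (range fun i => ⨆ k, G i k) :=
    ⟨-B, forall_mem_range.2 fun i => (abs_le.1 (abs_ciSup_le_of_abs_le hB (hG i))).1⟩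
  exact abs_ciInf_sub_ciInf_le (bddBelow_iSup hF) (bddBelow_iSup hF') hε fun i =>
    abs_ciSup_sub_ciSup_le (bddAbove (hF i)) (bddAbove (hF' i)) hε (h i)

end InfSup

section Softmax

variable {K : ℕ}

lemma softmax_nonneg (v : Fin K → ℝ) (a : Fin K) : 0 ≤ softmax v a := by
  unfold softmax; positivity

lemma softmax_le_one (v : Fin K → ℝ) (a : Fin K) : softmax v a ≤ 1 :=
  div_le_one_of_le₀ (single_le_sum (fun j _ => (Real.exp_pos (v j)).le) (mem_univ a))
    (sum_nonneg fun j _ => (Real.exp_pos (v j)).le)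

/-- Shifting every logit by at most `δ` changes the numerator of the softmax by a factor of at
least `e^{-δ}` and its denominator by a factor of at most `e^δ`. -/
lemma exp_neg_two_mul_mul_softmax_le {v v' : Fin K → ℝ} {δ : ℝ} (h : ∀ j, |v j - v' j| ≤ δ)
    (a : Fin K) : Real.exp (-(2 * δ)) * softmax v a ≤ softmax v' a := by
  have hnum : Real.exp (v a - δ) ≤ Real.exp (v' a) :=
    Real.exp_le_exp.2 (by linarith [(abs_le.1 (h a)).2])
  have hden : ∑ j, Real.exp (v' j) ≤ ∑ j, Real.exp (v j + δ) :=
    sum_le_sum fun j _ => Real.exp_le_exp.2 (by linarith [(abs_le.1 (h j)).1])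
  have hshift :
      Real.exp (-(2 * δ)) * softmax v a = Real.exp (v a - δ) / ∑ j, Real.exp (v j + δ) := by
    rw [softmax, show 2 * δ = δ + δ by ring]
    simp only [Real.exp_add, Real.exp_sub, Real.exp_neg, ← sum_mul]
    field_simp
  rw [hshift]
  exact div_le_div₀ (Real.exp_pos _).le hnum
    (sum_pos (fun j _ => Real.exp_pos _) ⟨a, mem_univ a⟩) hden

lemma abs_softmax_sub_softmax_le {v v' : Fin K → ℝ} {δ : ℝ} (h : ∀ j, |v j - v' j| ≤ δ)
    (a : Fin K) : |softmax v a - softmax v' a| ≤ 2 * δ := by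
  have h' : ∀ j, |v' j - v j| ≤ δ := fun j => abs_sub_comm (v j) (v' j) ▸ h j
  have hδ : 0 ≤ δ := (abs_nonneg _).trans (h a)
  have hexp : 1 - 2 * δ ≤ Real.exp (-(2 * δ)) := by linarith [Real.add_one_le_exp (-(2 * δ))]
  have hvv' := exp_neg_two_mul_mul_softmax_le h a
  have hv'v := exp_neg_two_mul_mul_softmax_le h' a
  have := softmax_le_one v a
  have := softmax_le_one v' a
  have := softmax_nonneg v a
  have := softmax_nonneg v' a
  rw [abs_le]
  constructor <;> nlinarith

end Softmax

lemma abs_mulVec_apply_le_frob_mul_norm {K d : ℕ} (W : Matrix (Fin K) (Fin d) ℝ)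
    (x : EuclideanSpace ℝ (Fin d)) (i : Fin K) :
    |W.mulVec (fun k => x k) i| ≤ frob W * ‖x‖ := by
  have hrow : ∑ j, W i j ^ 2 ≤ frob W ^ 2 := by
    rw [frob, Real.sq_sqrt (by positivity)]
    exact single_le_sum (f := fun i => ∑ j, W i j ^ 2) (fun i _ => by positivity) (mem_univ i)
  refine abs_le_of_sq_le_sq ?_ (by unfold frob; positivity)
  calc W.mulVec (fun k => x k) i ^ 2 = (∑ j, W i j * x j) ^ 2 := rfl
    _ ≤ (∑ j, W i j ^ 2) * ∑ j, x j ^ 2 :=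
        sum_mul_sq_le_sq_mul_sq _ _ _
    _ ≤ frob W ^ 2 * ‖x‖ ^ 2 := by
        rw [EuclideanSpace.real_norm_sq_eq]
        exact mul_le_mul_of_nonneg_right hrow (by positivity)
    _ = (frob W * ‖x‖) ^ 2 := by ring

section Payoff

variable {S : Type} {d K n : ℕ} (s st sb : Fin n → S) (a : Fin n → Fin K)

def mhatPayoff (ψ : S → EuclideanSpace ℝ (Fin d)) (W : Matrix (Fin K) (Fin d) ℝ)
    (g : S → ℝ) : ℝ :=
  (1 / n : ℝ) * ∑ j, ((K : ℝ) * softmax (W.mulVec fun k => ψ (s j) k) (a j) * g (st j)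
    - g (sb j))

lemma mhat_eq_iInf_iSup_mhatPayoff (G : Set (S → ℝ)) (ψ : S → EuclideanSpace ℝ (Fin d)) :
    mhat G s st sb a ψ =
      ⨅ W : {W : Matrix (Fin K) (Fin d) ℝ // frob W ≤ 1}, ⨆ g : G,
        mhatPayoff s st sb a ψ W.1 g.1 :=
  rfl

variable {s st sb a}

lemma abs_mhatPayoff_le (ψ : S → EuclideanSpace ℝ (Fin d)) (W : Matrix (Fin K) (Fin d) ℝ)
    {g : S → ℝ} (hg : ∀ x, |g x| ≤ 1) : |mhatPayoff s st sb a ψ W g| ≤ K + 1 := by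
  have hterm (j : Fin n) :
      |(K : ℝ) * softmax (W.mulVec fun k => ψ (s j) k) (a j) * g (st j) - g (sb j)| ≤ K + 1 := by
    have hσ := abs_of_nonneg (softmax_nonneg (W.mulVec fun k => ψ (s j) k) (a j))
    have := softmax_le_one (W.mulVec fun k => ψ (s j) k) (a j)
    refine (abs_sub _ _).trans (add_le_add ?_ (hg _))
    rw [abs_mul, abs_mul, Nat.abs_cast, hσ, mul_assoc]
    exact mul_le_of_le_one_right (by positivity) (mul_le_one₀ this (abs_nonneg _) (hg _))
  calc |mhatPayoff s st sb a ψ W g|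
      ≤ (1 / n : ℝ) * ∑ _j : Fin n, ((K : ℝ) + 1) := by
        rw [mhatPayoff, abs_mul, abs_of_nonneg (by positivity)]
        exact mul_le_mul_of_nonneg_left
          ((abs_sum_le_sum_abs _ _).trans (sum_le_sum fun j _ => hterm j)) (by positivity)
    _ = (n / n : ℝ) * (K + 1) := by
        rw [sum_const, card_univ, Fintype.card_fin, nsmul_eq_mul]; ring
    _ ≤ K + 1 := mul_le_of_le_one_left (by positivity) (div_self_le_one _)

lemma abs_mhatPayoff_sub_mhatPayoff_le (φ φ' : S → EuclideanSpace ℝ (Fin d))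
    {W : Matrix (Fin K) (Fin d) ℝ} (hW : frob W ≤ 1) {g : S → ℝ} (hg : ∀ x, |g x| ≤ 1) :
    |mhatPayoff s st sb a φ W g - mhatPayoff s st sb a φ' W g| ≤
      2 * K / n * ∑ j, ‖φ (s j) - φ' (s j)‖ := by
  have hterm (j : Fin n) :
      |(K : ℝ) * (softmax (W.mulVec fun k => φ (s j) k) (a j)
        - softmax (W.mulVec fun k => φ' (s j) k) (a j)) * g (st j)|
        ≤ 2 * K * ‖φ (s j) - φ' (s j)‖ := by
    have hlogits (i : Fin K) :
        |W.mulVec (fun k => φ (s j) k) i - W.mulVec (fun k => φ' (s j) k) i|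
          ≤ ‖φ (s j) - φ' (s j)‖ := by
      rw [← Pi.sub_apply, ← Matrix.mulVec_sub]
      exact (abs_mulVec_apply_le_frob_mul_norm W (φ (s j) - φ' (s j)) i).trans
        (mul_le_of_le_one_left (norm_nonneg _) hW)
    rw [abs_mul, abs_mul, Nat.abs_cast]
    calc (K : ℝ) * |softmax (W.mulVec fun k => φ (s j) k) (a j)
          - softmax (W.mulVec fun k => φ' (s j) k) (a j)| * |g (st j)|
        ≤ K * (2 * ‖φ (s j) - φ' (s j)‖) * 1 := by
          gcongr
          exacts [abs_softmax_sub_softmax_le hlogits (a j), hg _]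
      _ = 2 * K * ‖φ (s j) - φ' (s j)‖ := by ring
  calc |mhatPayoff s st sb a φ W g - mhatPayoff s st sb a φ' W g|
      = (1 / n : ℝ) * |∑ j, (K : ℝ) * (softmax (W.mulVec fun k => φ (s j) k) (a j)
          - softmax (W.mulVec fun k => φ' (s j) k) (a j)) * g (st j)| := by
        rw [mhatPayoff, mhatPayoff, ← mul_sub, ← sum_sub_distrib, abs_mul,
          abs_of_nonneg (by positivity : (0 : ℝ) ≤ 1 / n)]
        congr 2
        exact sum_congr rfl fun j _ => by ring
    _ ≤ (1 / n : ℝ) * ∑ j, 2 * K * ‖φ (s j) - φ' (s j)‖ :=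
        mul_le_mul_of_nonneg_left
          ((abs_sum_le_sum_abs _ _).trans (sum_le_sum fun j _ => hterm j)) (by positivity)
    _ = 2 * K / n * ∑ j, ‖φ (s j) - φ' (s j)‖ := by rw [← mul_sum]; ring

end Payoff

lemma abs_mhat_sub_mhat_le {S : Type} {d K n : ℕ} {G : Set (S → ℝ)}
    (hG : ∀ g ∈ G, ∀ x, |g x| ≤ 1) (s st sb : Fin n → S) (a : Fin n → Fin K)
    (φ φ' : S → EuclideanSpace ℝ (Fin d)) :
    |mhat G s st sb a φ - mhat G s st sb a φ'| ≤ 2 * K / n * ∑ j, ‖φ (s j) - φ' (s j)‖ := by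
  rw [mhat_eq_iInf_iSup_mhatPayoff, mhat_eq_iInf_iSup_mhatPayoff]
  exact abs_ciInf_ciSup_sub_ciInf_ciSup_le (by positivity)
    (fun _ g => abs_mhatPayoff_le φ _ (hG g g.2)) (fun _ g => abs_mhatPayoff_le φ' _ (hG g g.2))
    (by positivity) fun W g => abs_mhatPayoff_sub_mhatPayoff_le φ φ' W.2 (hG g g.2)

theorem stmt_17_general (S : Type) (d K n : ℕ)
    (φ φ' : S → EuclideanSpace ℝ (Fin d))
    (G : Set (S → ℝ)) (hG : ∀ g ∈ G, ∀ s, |g s| ≤ 1)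
    (s st sb : Fin n → S) (a : Fin n → Fin K) :
    (mhat G s st sb a φ - mhat G s st sb a φ') ^ 2 ≤
      (4 * (K : ℝ) ^ 2 / n) * ∑ j, ‖φ (s j) - φ' (s j)‖ ^ 2 := by
  set D := ∑ j, ‖φ (s j) - φ' (s j)‖
  obtain ⟨hlower, hupper⟩ := abs_le.1 (abs_mhat_sub_mhat_le hG s st sb a φ φ')
  have hCS : D ^ 2 ≤ n * ∑ j, ‖φ (s j) - φ' (s j)‖ ^ 2 := by
    simpa using sq_sum_le_card_mul_sum_sq (s := univ) (f := fun j => ‖φ (s j) - φ' (s j)‖)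
  calc (mhat G s st sb a φ - mhat G s st sb a φ') ^ 2
      ≤ (2 * K / n * D) ^ 2 := sq_le_sq' hlower hupper
    _ = 4 * K ^ 2 / (n * n) * D ^ 2 := by ring
    _ ≤ 4 * K ^ 2 / (n * n) * (n * ∑ j, ‖φ (s j) - φ' (s j)‖ ^ 2) := by gcongr
    _ = 4 * K ^ 2 * (n / (n * n)) * ∑ j, ‖φ (s j) - φ' (s j)‖ ^ 2 := by ring
    -- `n / (n * n) = n⁻¹` holds also for `n = 0`, as both sides are `0`.
    _ = 4 * K ^ 2 / n * ∑ j, ‖φ (s j) - φ' (s j)‖ ^ 2 := by rw [div_self_mul_self']; ring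

/-- For two representations `φ, φ'`,
`(m̂_x(φ) − m̂_x(φ'))² ≤ (4K²/n) ∑_j ‖φ(s_j) − φ'(s_j)‖²`. -/
theorem stmt_17 (S : Type) (d K n : ℕ) (hn : 0 < n)
    (φ φ' : S → EuclideanSpace ℝ (Fin d))
    (G : Set (S → ℝ)) (hGne : G.Nonempty) (hG : ∀ g ∈ G, ∀ s, |g s| ≤ 1)
    (s st sb : Fin n → S) (a : Fin n → Fin K) :
    (mhat G s st sb a φ - mhat G s st sb a φ') ^ 2 ≤
      (4 * (K : ℝ) ^ 2 / n) * ∑ j, ‖φ (s j) - φ' (s j)‖ ^ 2 :=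
  stmt_17_general S d K n φ φ' G hG s st sb a
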